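/- Let f = x⁴ + y⁴ + z⁴ + x²y²z² in ℚ[x,y,z]. The derivation θ₂ = ((1/64)x⁵y⁴z + (1/32)x³y²z³ − (1/4)xz)·∂x + ((1/64)x⁴y⁵z − (1/16)x⁴yz − (1/4)yz)·∂y + ((1/8)x²y² − (1/4)z²)·∂z satisfies θ₂(f) = ((1/16)x⁴y⁴z − z)·f; in particular θ₂ is a logarithmic derivation with respect to the divisor D = (f = 0). -/
import Mathlib


open MvPolynomial

noncomputable section

/-- The polynomial ring ℚ[x,y,z]. -/
abbrev R3 : Type := MvPolynomial (Fin 3) ℚ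

def x : R3 := X 0
def y : R3 := X 1
def z : R3 := X 2

/-- f = x⁴ + y⁴ + z⁴ + x²y²z². -/
def f : R3 := x ^ 4 + y ^ 4 + z ^ 4 + x ^ 2 * y ^ 2 * z ^ 2

/-- θ₂ = ((1/64)x⁵y⁴z + (1/32)x³y²z³ − (1/4)xz)·∂x
        + ((1/64)x⁴y⁵z − (1/16)x⁴yz − (1/4)yz)·∂y + ((1/8)x²y² − (1/4)z²)·∂z. -/
def θ₂ : Derivation ℚ R3 R3 :=
  mkDerivation ℚ
    ![C (1/64 : ℚ) * x ^ 5 * y ^ 4 * z + C (1/32 : ℚ) * x ^ 3 * y ^ 2 * z ^ 3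
        - C (1/4 : ℚ) * x * z,
      C (1/64 : ℚ) * x ^ 4 * y ^ 5 * z - C (1/16 : ℚ) * x ^ 4 * y * z
        - C (1/4 : ℚ) * y * z,
      C (1/8 : ℚ) * x ^ 2 * y ^ 2 - C (1/4 : ℚ) * z ^ 2]

theorem theta2_logarithmic :
    θ₂ f = (C (1/16 : ℚ) * x ^ 4 * y ^ 4 * z - z) * f ∧
      ∃ a : R3, θ₂ f = a * f := by
  have h : θ₂ f = (C (1/16 : ℚ) * x ^ 4 * y ^ 4 * z - z) * f := by
    have h0 : θ₂ x = C (1/64 : ℚ) * x ^ 5 * y ^ 4 * z + C (1/32 : ℚ) * x ^ 3 * y ^ 2 * z ^ 3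
        - C (1/4 : ℚ) * x * z := by
      simp [θ₂, x, mkDerivation_X]
    have h1 : θ₂ y = C (1/64 : ℚ) * x ^ 4 * y ^ 5 * z - C (1/16 : ℚ) * x ^ 4 * y * z
        - C (1/4 : ℚ) * y * z := by
      simp [θ₂, y, mkDerivation_X]
    have h2 : θ₂ z = C (1/8 : ℚ) * x ^ 2 * y ^ 2 - C (1/4 : ℚ) * z ^ 2 := by
      simp [θ₂, z, mkDerivation_X]
    simp only [f, map_add, Derivation.leibniz_pow, h0, h1, h2, Derivation.leibniz,
      smul_eq_mul, nsmul_eq_mul]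
    have e32 : (C (1/32 : ℚ) : R3) = 2 * C (1/64) := by
      rw [← map_ofNat (C : ℚ →+* R3) 2, ← map_mul]; norm_num
    have e16 : (C (1/16 : ℚ) : R3) = 4 * C (1/64) := by
      rw [← map_ofNat (C : ℚ →+* R3) 4, ← map_mul]; norm_num
    have e8 : (C (1/8 : ℚ) : R3) = 8 * C (1/64) := by
      rw [← map_ofNat (C : ℚ →+* R3) 8, ← map_mul]; norm_num
    have e4 : (C (1/4 : ℚ) : R3) = 16 * C (1/64) := by
      rw [← map_ofNat (C : ℚ →+* R3) 16, ← map_mul]; norm_num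
    have h : (C (1/64 : ℚ) : R3) * 64 = 1 := by
      rw [← map_ofNat (C : ℚ →+* R3) 64, ← map_mul]; norm_num
    simp only [e32, e16, e8, e4]
    linear_combination (-(z * (x ^ 4 + y ^ 4 + z ^ 4 + x ^ 2 * y ^ 2 * z ^ 2))) * h
  exact ⟨h, ⟨_, h⟩⟩

end
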